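/- Let G be a distribution on [0,+∞] such that G({0}) > 1 − p_c(d). Let v ∈ S^{d−1}, let A be a non-degenerate hyperrectangle normal to v, let h be a height function satisfying condition (⋆), and let n be large enough that h(n) > 2d. Define the event E_n = ∩_{x ∈ cyl(nA, h(n)/2) ∩ ℤ^d} {card_v(C_{G,0}(x)) < h(n)/2}. Then on the event E_n one has H_{G,h(n)}(nA) = h(n), every edge set achieving the infimum in χ_G(nA, h(n), v) is a cutset of null (hence minimal) capacity between the top and the bottom of cyl(nA, h(n)), and consequently ψ_G(nA, h(n), v) ≤ χ_G(nA, h(n), v). -/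

import Mathlib

open MeasureTheory Filter Set
open scoped ENNReal NNReal Topology

noncomputable section

namespace FPP

/-- Lattice vertices of `ℤ^d`. -/
abbrev Vd (d : ℕ) := Fin d → ℤ

/-- Ambient Euclidean space `ℝ^d`. -/
abbrev Pt (d : ℕ) := EuclideanSpace ℝ (Fin d)

/-- Embedding of the lattice into `ℝ^d`. -/
def toPt {d : ℕ} (x : Vd d) : Pt d := (EuclideanSpace.equiv (Fin d) ℝ).symm fun i => (x i : ℝ)

/-- Two lattice points are adjacent (nearest neighbours for the Euclidean norm). -/
def Adj {d : ℕ} (x y : Vd d) : Prop := (∑ i, (x i - y i) ^ 2) = 1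

/-- The edges of the lattice `(ℤ^d, 𝔼^d)`, as unordered pairs. -/
def IsLatticeEdge {d : ℕ} (e : Sym2 (Vd d)) : Prop := ∃ x y, Adj x y ∧ e = s(x, y)

/-- A capacity configuration: a capacity in `[0,+∞]` for each (unordered pair of) vertices. -/
abbrev Cfg (d : ℕ) := Sym2 (Vd d) → ℝ≥0∞

/-- The capacity `T(E)` of a set of edges: the sum of the capacities of its edges. -/
def capa {d : ℕ} (c : Cfg d) (E : Set (Sym2 (Vd d))) : ℝ≥0∞ := ∑' e : E, c e

/-- A lattice path `v 0, v 1, …, v n` (only the first `n+1` vertices are relevant). -/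
structure LatPath (d : ℕ) where
  n : ℕ
  v : ℕ → Vd d
  adj : ∀ i < n, Adj (v i) (v (i + 1))

/-- The cylinder `cyl(A, h)` of basis `A` and height `h` in direction `vec`. -/
def cyl {d : ℕ} (A : Set (Pt d)) (vec : Pt d) (h : ℝ) : Set (Pt d) :=
  {y | ∃ x ∈ A, ∃ t ∈ Icc (0 : ℝ) h, y = x + t • vec}

/-- The translate `A + h vec`. -/
def transl {d : ℕ} (A : Set (Pt d)) (vec : Pt d) (h : ℝ) : Set (Pt d) :=
  (fun x => x + h • vec) '' A

/-- Discretized bottom `B(A,h)` of the cylinder: vertices of the cylinder having a neighbour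
outside it such that the corresponding edge intersects `A`. -/
def Bottom {d : ℕ} (A : Set (Pt d)) (vec : Pt d) (h : ℝ) : Set (Vd d) :=
  {x | toPt x ∈ cyl A vec h ∧ ∃ y : Vd d, Adj x y ∧ toPt y ∉ cyl A vec h ∧
        (segment ℝ (toPt x) (toPt y) ∩ A).Nonempty}

/-- Discretized top `T(A,h)` of the cylinder: vertices of the cylinder having a neighbour
outside it such that the corresponding edge intersects `A + h vec`. -/
def TopV {d : ℕ} (A : Set (Pt d)) (vec : Pt d) (h : ℝ) : Set (Vd d) :=
  {x | toPt x ∈ cyl A vec h ∧ ∃ y : Vd d, Adj x y ∧ toPt y ∉ cyl A vec h ∧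
        (segment ℝ (toPt x) (toPt y) ∩ transl A vec h).Nonempty}

/-- The edges of the lattice both of whose endpoints lie in the cylinder. -/
def cylEdges {d : ℕ} (A : Set (Pt d)) (vec : Pt d) (h : ℝ) : Set (Sym2 (Vd d)) :=
  {e | IsLatticeEdge e ∧ ∀ x ∈ e, toPt x ∈ cyl A vec h}

/-- `E` cuts the top from the bottom of the cylinder `cyl(A,h)`: every lattice path from
`T(A,h)` to `B(A,h)` staying inside the cylinder uses an edge of `E`. -/
def CutsCyl {d : ℕ} (A : Set (Pt d)) (vec : Pt d) (h : ℝ) (E : Set (Sym2 (Vd d))) : Prop :=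
  ∀ γ : LatPath d, (∀ i ≤ γ.n, toPt (γ.v i) ∈ cyl A vec h) →
    γ.v 0 ∈ TopV A vec h → γ.v γ.n ∈ Bottom A vec h →
    ∃ i < γ.n, s(γ.v i, γ.v (i + 1)) ∈ E

/-- The maximal flow `Φ(A,h)` from the top to the bottom of `cyl(A,h)`: by the max-flow min-cut
theorem, the minimal capacity of a cutset between the top and the bottom of the cylinder. -/
def Phi {d : ℕ} (c : Cfg d) (A : Set (Pt d)) (vec : Pt d) (h : ℝ) : ℝ≥0∞ :=
  sInf {r | ∃ E : Set (Sym2 (Vd d)), E ⊆ cylEdges A vec h ∧ CutsCyl A vec h E ∧ r = capa c E}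

/-- `ψ(A,h,vec)`: the minimal cardinality of a cutset between the top and the bottom of
`cyl(A,h)` whose capacity achieves the minimal cutset capacity `Φ(A,h)`. -/
def psi {d : ℕ} (c : Cfg d) (A : Set (Pt d)) (vec : Pt d) (h : ℝ) : ℕ∞ :=
  sInf {r | ∃ E : Set (Sym2 (Vd d)), E ⊆ cylEdges A vec h ∧ CutsCyl A vec h E ∧
    capa c E = Phi c A vec h ∧ r = E.encard}

/-- The hyperplane spanned by `A` (with normal vector `vec`). -/
def hypP {d : ℕ} (A : Set (Pt d)) (vec : Pt d) : Set (Pt d) :=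
  {y | ∃ x ∈ A, ∃ w : Pt d, (inner ℝ w vec : ℝ) = 0 ∧ y = x + w}

/-- The slab of basis the hyperplane spanned by `A` and of height `h`. -/
def slab {d : ℕ} (A : Set (Pt d)) (vec : Pt d) (h : ℝ) : Set (Pt d) :=
  {y | ∃ x ∈ hypP A vec, ∃ r ∈ Icc (0 : ℝ) h, y = x + r • vec}

/-- The slab of infinite height. -/
def slabInf {d : ℕ} (A : Set (Pt d)) (vec : Pt d) : Set (Pt d) :=
  {y | ∃ x ∈ hypP A vec, ∃ r : ℝ, 0 ≤ r ∧ y = x + r • vec}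

/-- `W(A,h,vec)`: discretized version of `hyp(A + h vec)`, the vertices of the slab having a
neighbour in the infinite slab but beyond height `h`. -/
def Wset {d : ℕ} (A : Set (Pt d)) (vec : Pt d) (h : ℝ) : Set (Vd d) :=
  {x | toPt x ∈ slab A vec h ∧ ∃ y : Vd d, Adj x y ∧ toPt y ∈ slabInf A vec ∧
        toPt y ∉ slab A vec h}

/-- `E` cuts `Ā = cyl(A,d)` from `hyp(A + h vec)` in `slab(A,h,vec)`: every lattice path staying
in the slab, from `Ā` to `W(A,h,vec)`, uses an edge of `E`. -/
def CutsSlab {d : ℕ} (A : Set (Pt d)) (vec : Pt d) (h : ℝ) (E : Set (Sym2 (Vd d))) : Prop :=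
  ∀ γ : LatPath d, (∀ i ≤ γ.n, toPt (γ.v i) ∈ slab A vec h) →
    toPt (γ.v 0) ∈ cyl A vec (d : ℝ) → γ.v γ.n ∈ Wset A vec h →
    ∃ i < γ.n, s(γ.v i, γ.v (i + 1)) ∈ E

/-- One step along an edge of positive capacity. -/
def openRel {d : ℕ} (c : Cfg d) (x y : Vd d) : Prop := Adj x y ∧ 0 < c s(x, y)

/-- `C_{G,0}(x)`: the cluster of `x` in the percolation of edges of positive capacity. -/
def cluster {d : ℕ} (c : Cfg d) (x : Vd d) : Set (Vd d) :=
  {y | Relation.ReflTransGen (openRel c) x y}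

/-- One step along an edge avoiding the vertex set `C`. -/
def avoidRel {d : ℕ} (C : Set (Vd d)) (x y : Vd d) : Prop := Adj x y ∧ x ∉ C ∧ y ∉ C

/-- There is a path from `y` to infinity in `ℤ^d ∖ C`. -/
def EscapesToInfinity {d : ℕ} (C : Set (Vd d)) (y : Vd d) : Prop :=
  {z | Relation.ReflTransGen (avoidRel C) y z}.Infinite

/-- The exterior edge boundary `∂_e C` of a vertex set `C`. -/
def edgeBoundary {d : ℕ} (C : Set (Vd d)) : Set (Sym2 (Vd d)) :=
  {e | ∃ x y, Adj x y ∧ x ∈ C ∧ y ∉ C ∧ EscapesToInfinity C y ∧ e = s(x, y)}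

/-- The random height `H_{G,h}(A)`. -/
def Hrand {d : ℕ} (c : Cfg d) (A : Set (Pt d)) (vec : Pt d) (h : ℝ) : ℝ :=
  sInf {s : ℝ | h ≤ s ∧
    (⋃ x ∈ {z : Vd d | toPt z ∈ cyl A vec (h / 2)}, cluster c x) ∩ Wset A vec s = ∅}

/-- `χ(A,h,vec)`: the minimal cardinality of a set of edges of null capacity cutting
`Ā` from `hyp(A + H_{G,h}(A) vec)` in `slab(A, H_{G,h}(A), vec)`. -/
def chi {d : ℕ} (c : Cfg d) (A : Set (Pt d)) (vec : Pt d) (h : ℝ) : ℕ∞ :=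
  sInf {r | ∃ E : Set (Sym2 (Vd d)), (∀ e ∈ E, IsLatticeEdge e) ∧
    CutsSlab A vec (Hrand c A vec h) E ∧ capa c E = 0 ∧ r = E.encard}

/-- A non-degenerate hyperrectangle of dimension `d-1`, normal to `vec`. -/
structure Hyperrect (d : ℕ) (vec : Pt d) where
  base : Pt d
  dir : Fin (d - 1) → Pt d
  len : Fin (d - 1) → ℝ
  ortho : Orthonormal ℝ dir
  normal : ∀ i, (inner ℝ (dir i) vec : ℝ) = 0
  pos : ∀ i, 0 < len i

/-- The set of points of a hyperrectangle. -/
def Hyperrect.toSet {d : ℕ} {vec : Pt d} (R : Hyperrect d vec) : Set (Pt d) :=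
  {y | ∃ c : Fin (d - 1) → ℝ, (∀ i, c i ∈ Icc 0 (R.len i)) ∧ y = R.base + ∑ i, c i • R.dir i}

/-- `A` is a non-degenerate hyperrectangle normal to `vec`. -/
def IsHyperrect {d : ℕ} (A : Set (Pt d)) (vec : Pt d) : Prop :=
  ∃ R : Hyperrect d vec, A = R.toSet

/-- The dilation `nA` of a set. -/
def scale {d : ℕ} (n : ℕ) (A : Set (Pt d)) : Set (Pt d) := (fun x => (n : ℝ) • x) '' A

/-- Condition `(⋆)` on a height function: `h(n)/log n → ∞` and `h(n)/n → 0`. -/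
def StarCond (h : ℕ → ℝ) : Prop :=
  (∀ n, 0 < h n) ∧ Tendsto (fun n => h n / Real.log n) atTop atTop ∧
    Tendsto (fun n => h n / n) atTop (nhds 0)

/-- The Bernoulli measure of parameter `p` on `Bool`. -/
def bern (p : ℝ≥0∞) : Measure Bool := p • Measure.dirac true + (1 - p) • Measure.dirac false

/-- `c` is an i.i.d. family of Bernoulli(`p`) variables indexed by the edges of `ℤ^d`. -/
def BernoulliField {d : ℕ} {Ω : Type} [MeasurableSpace Ω] (P : Measure Ω) (p : ℝ≥0∞)
    (c : Sym2 (Vd d) → Ω → Bool) : Prop :=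
  ProbabilityTheory.iIndepFun
      (fun e : {e : Sym2 (Vd d) // IsLatticeEdge e} => c e.1) P ∧
    ∀ e : Sym2 (Vd d), IsLatticeEdge e → Measurable (c e) ∧ P.map (c e) = bern p

/-- The critical parameter `p_c(d)` of i.i.d. Bernoulli bond percolation on `ℤ^d`: the supremum
of the parameters `p` for which, in every i.i.d. Bernoulli(`p`) bond configuration, the open
cluster of the origin is almost surely finite. -/
def pc (d : ℕ) : ℝ≥0∞ :=
  sSup {p : ℝ≥0∞ | p ≤ 1 ∧ ∀ (Ω : Type) (_ : MeasurableSpace Ω) (P : Measure Ω),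
    IsProbabilityMeasure P → ∀ c : Sym2 (Vd d) → Ω → Bool, BernoulliField P p c →
      ∀ᵐ ω ∂P, (cluster (fun e => if c e ω then 1 else 0) (0 : Vd d)).Finite}

/-- `t` is an i.i.d. family of capacities with distribution `G`, indexed by the edges of `ℤ^d`. -/
def IIDField {d : ℕ} {Ω : Type} [MeasurableSpace Ω] (P : Measure Ω) (G : Measure ℝ≥0∞)
    (t : Sym2 (Vd d) → Ω → ℝ≥0∞) : Prop :=
  ProbabilityTheory.iIndepFun
      (fun e : {e : Sym2 (Vd d) // IsLatticeEdge e} => t e.1) P ∧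
    ∀ e : Sym2 (Vd d), IsLatticeEdge e → Measurable (t e) ∧ P.map (t e) = G

/-- The `(d-1)`-dimensional Hausdorff measure of a subset of `ℝ^d`. -/
def HM (d : ℕ) (S : Set (Pt d)) : ℝ≥0∞ := Measure.hausdorffMeasure ((d : ℝ) - 1) S

/-- The distribution `G_p = p δ_1 + (1-p) δ_0` on `[0,+∞]`. -/
def Gp (p : ℝ≥0∞) : Measure ℝ≥0∞ := p • Measure.dirac 1 + (1 - p) • Measure.dirac 0

/-! ### Auxiliary lemmas -/

section Aux

variable {d : ℕ}

lemma toPt_apply (x : Vd d) (i : Fin d) : toPt x i = (x i : ℝ) := rfl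

lemma adj_symm {x y : Vd d} (h : Adj x y) : Adj y x := by
  unfold Adj at *; rw [← h]; congr 1; funext i; ring

lemma adj_irrefl {x : Vd d} (h : Adj x x) : False := by
  unfold Adj at h; simp at h

lemma norm_sub_of_adj {x y : Vd d} (h : Adj x y) : ‖toPt x - toPt y‖ = 1 := by
  have h1 : ‖toPt x - toPt y‖ = Real.sqrt (∑ i, ((x i : ℝ) - y i) ^ 2) := by
    rw [EuclideanSpace.norm_eq]
    congr 1; apply Finset.sum_congr rfl; intro i _
    simp [toPt_apply, sq_abs]
  rw [h1]
  have h2 : (∑ i, ((x i : ℝ) - y i) ^ 2) = ((∑ i, (x i - y i) ^ 2 : ℤ) : ℝ) := by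
    push_cast; ring
  rw [h2, h]; simp

lemma inner_diff_le_of_adj {vec : Pt d} (hv : ‖vec‖ = 1) {x y : Vd d} (h : Adj x y) :
    |(inner ℝ (toPt x) vec : ℝ) - inner ℝ (toPt y) vec| ≤ 1 := by
  have h1 : (inner ℝ (toPt x) vec : ℝ) - inner ℝ (toPt y) vec = inner ℝ (toPt x - toPt y) vec := by
    rw [inner_sub_left]
  rw [h1]
  calc |(inner ℝ (toPt x - toPt y) vec : ℝ)| ≤ ‖toPt x - toPt y‖ * ‖vec‖ :=
        abs_real_inner_le_norm _ _
    _ = 1 := by rw [norm_sub_of_adj h, hv]; ring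

/-- The percolation graph of edges with positive capacity. -/
def openGraph (c : Cfg d) : SimpleGraph (Vd d) where
  Adj := openRel c
  symm := by
    constructor
    rintro a b ⟨h1, h2⟩
    exact ⟨adj_symm h1, by rwa [Sym2.eq_swap]⟩
  loopless := by constructor; rintro a ⟨h1, _⟩; exact adj_irrefl h1

lemma mem_cluster_of_mem_support (c : Cfg d) {x y : Vd d}
    (p : (openGraph c).Walk x y) {z : Vd d} (hz : z ∈ p.support) : z ∈ cluster c x :=
  (SimpleGraph.reachable_iff_reflTransGen _ _).1 ⟨p.takeUntil z hz⟩

lemma walk_height_bound (c : Cfg d) (f : Vd d → ℝ)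
    (hf : ∀ a b : Vd d, Adj a b → f b - f a ≤ 1) {x y : Vd d}
    (p : (openGraph c).Walk x y) : f y ≤ f x + p.length := by
  induction p with
  | nil => simp
  | cons h p ih =>
    rename_i u v w
    have h1 : f v - f u ≤ 1 := hf _ _ h.1
    simp only [SimpleGraph.Walk.length_cons]
    push_cast
    linarith

lemma reach_height_bound (c : Cfg d) (f : Vd d → ℝ)
    (hf : ∀ a b : Vd d, Adj a b → f b - f a ≤ 1) {x y : Vd d}
    (hxy : Relation.ReflTransGen (openRel c) x y) {k : ℕ}
    (hk : (cluster c x).encard ≤ (k : ℕ∞)) : f y ≤ f x + ((k : ℝ) - 1) := by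
  have hreach : (openGraph c).Reachable x y := (SimpleGraph.reachable_iff_reflTransGen _ _).2 hxy
  obtain ⟨w⟩ := hreach
  set p := w.toPath with hp
  have hnodup : p.1.support.Nodup := p.2.support_nodup
  have hsub : (p.1.support.toFinset : Set (Vd d)) ⊆ cluster c x := by
    intro z hz
    simp only [List.coe_toFinset, List.mem_toFinset, Set.mem_setOf_eq] at hz
    exact mem_cluster_of_mem_support c p.1 hz
  have hcard : (p.1.support.toFinset.card : ℕ∞) ≤ (k : ℕ∞) := by
    calc (p.1.support.toFinset.card : ℕ∞) = (↑p.1.support.toFinset : Set (Vd d)).encard := by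
          rw [Set.encard_coe_eq_coe_finsetCard]
      _ ≤ (cluster c x).encard := Set.encard_mono hsub
      _ ≤ (k : ℕ∞) := hk
  have hlen : p.1.support.toFinset.card = p.1.length + 1 := by
    rw [List.toFinset_card_of_nodup hnodup, SimpleGraph.Walk.length_support]
  rw [hlen] at hcard
  have hlk : p.1.length + 1 ≤ k := by exact_mod_cast hcard
  have hb := walk_height_bound c f hf p.1
  have hlr : ((p.1.length : ℝ)) ≤ (k : ℝ) - 1 := by
    have := (Nat.cast_le (α := ℝ)).2 hlk
    push_cast at this; linarith
  linarith

/-- The reverse of a lattice path. -/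
def LatPath.reverse (γ : LatPath d) : LatPath d where
  n := γ.n
  v := fun i => γ.v (γ.n - i)
  adj := by
    intro i hi
    have h1 : γ.n - i = (γ.n - (i + 1)) + 1 := by omega
    show Adj (γ.v (γ.n - i)) (γ.v (γ.n - (i + 1)))
    rw [h1]
    exact adj_symm (γ.adj _ (by omega))

section Geometry

variable {vec : Pt d} {S : Set (Pt d)} {B : ℝ}

lemma inner_scale_hyperrect (R : Hyperrect d vec) (n : ℕ) :
    ∀ a ∈ scale n R.toSet, (inner ℝ a vec : ℝ) = (n : ℝ) * inner ℝ R.base vec := by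
  rintro a ⟨q, ⟨cc, hcc, rfl⟩, rfl⟩
  rw [real_inner_smul_left, inner_add_left, sum_inner]
  have : ∀ i ∈ Finset.univ, (inner ℝ (cc i • R.dir i) vec : ℝ) = 0 := by
    intro i _
    rw [real_inner_smul_left, R.normal i]; ring
  rw [Finset.sum_congr rfl this]
  simp

lemma scale_hyperrect_nonempty (R : Hyperrect d vec) (n : ℕ) : (scale n R.toSet).Nonempty := by
  refine ⟨(n : ℝ) • R.base, R.base, ⟨fun _ => 0, fun i => ⟨le_refl _, le_of_lt (R.pos i)⟩, ?_⟩, rfl⟩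
  simp

lemma inner_add_smul_self (hvec : ‖vec‖ = 1) (a : Pt d) (t : ℝ) :
    (inner ℝ (a + t • vec) vec : ℝ) = inner ℝ a vec + t := by
  rw [inner_add_left, real_inner_smul_left, real_inner_self_eq_norm_sq, hvec]
  ring

lemma inner_mem_of_mem_cyl (hvec : ‖vec‖ = 1) (hA1 : ∀ a ∈ S, (inner ℝ a vec : ℝ) = B)
    {p : Pt d} {s : ℝ} (hp : p ∈ cyl S vec s) : (inner ℝ p vec : ℝ) - B ∈ Icc (0 : ℝ) s := by
  obtain ⟨a, ha, t, ht, rfl⟩ := hp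
  rw [inner_add_smul_self hvec, hA1 a ha]
  exact ⟨by linarith [ht.1], by linarith [ht.2]⟩

lemma mem_cyl_of_le (hvec : ‖vec‖ = 1) (hA1 : ∀ a ∈ S, (inner ℝ a vec : ℝ) = B)
    {p : Pt d} {s s' : ℝ} (hp : p ∈ cyl S vec s)
    (hle : (inner ℝ p vec : ℝ) - B ≤ s') : p ∈ cyl S vec s' := by
  obtain ⟨a, ha, t, ht, rfl⟩ := hp
  refine ⟨a, ha, t, ⟨ht.1, ?_⟩, rfl⟩
  rw [inner_add_smul_self hvec, hA1 a ha] at hle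
  linarith

lemma hypP_eq (hA1 : ∀ a ∈ S, (inner ℝ a vec : ℝ) = B) (hA0 : S.Nonempty) :
    hypP S vec = {p : Pt d | (inner ℝ p vec : ℝ) = B} := by
  ext p
  constructor
  · rintro ⟨a, ha, w, hw, rfl⟩
    show (inner ℝ (a + w) vec : ℝ) = B
    rw [inner_add_left, hA1 a ha, hw]; ring
  · intro hp
    obtain ⟨a0, ha0⟩ := hA0
    refine ⟨a0, ha0, p - a0, ?_, by abel⟩
    rw [inner_sub_left, hp, hA1 a0 ha0]; ring

lemma slab_eq (hvec : ‖vec‖ = 1) (hA1 : ∀ a ∈ S, (inner ℝ a vec : ℝ) = B) (hA0 : S.Nonempty)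
    {s : ℝ} : slab S vec s = {p : Pt d | (inner ℝ p vec : ℝ) - B ∈ Icc (0 : ℝ) s} := by
  ext p
  constructor
  · rintro ⟨x, hx, r, hr, rfl⟩
    rw [hypP_eq hA1 hA0] at hx
    rw [Set.mem_setOf_eq, inner_add_smul_self hvec, hx]
    exact ⟨by linarith [hr.1], by linarith [hr.2]⟩
  · intro hp
    refine ⟨p - ((inner ℝ p vec : ℝ) - B) • vec, ?_, (inner ℝ p vec : ℝ) - B, hp, by abel⟩
    rw [hypP_eq hA1 hA0]
    show (inner ℝ (p - ((inner ℝ p vec : ℝ) - B) • vec) vec : ℝ) = B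
    rw [inner_sub_left, real_inner_smul_left, real_inner_self_eq_norm_sq, hvec]
    ring

lemma slabInf_eq (hvec : ‖vec‖ = 1) (hA1 : ∀ a ∈ S, (inner ℝ a vec : ℝ) = B) (hA0 : S.Nonempty) :
    slabInf S vec = {p : Pt d | B ≤ (inner ℝ p vec : ℝ)} := by
  ext p
  constructor
  · rintro ⟨x, hx, r, hr, rfl⟩
    rw [hypP_eq hA1 hA0] at hx
    rw [Set.mem_setOf_eq, inner_add_smul_self hvec, hx]
    linarith
  · intro hp
    refine ⟨p - ((inner ℝ p vec : ℝ) - B) • vec, ?_, (inner ℝ p vec : ℝ) - B, by simpa using hp, by abel⟩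
    rw [hypP_eq hA1 hA0]
    show (inner ℝ (p - ((inner ℝ p vec : ℝ) - B) • vec) vec : ℝ) = B
    rw [inner_sub_left, real_inner_smul_left, real_inner_self_eq_norm_sq, hvec]
    ring

lemma cyl_subset_slab (hvec : ‖vec‖ = 1) (hA1 : ∀ a ∈ S, (inner ℝ a vec : ℝ) = B)
    (hA0 : S.Nonempty) {s : ℝ} : cyl S vec s ⊆ slab S vec s := by
  intro p hp
  rw [slab_eq hvec hA1 hA0]
  exact inner_mem_of_mem_cyl hvec hA1 hp

lemma transl_subset_cyl {s : ℝ} (hs : 0 ≤ s) : transl S vec s ⊆ cyl S vec s := by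
  rintro p ⟨a, ha, rfl⟩
  exact ⟨a, ha, s, ⟨hs, le_refl _⟩, rfl⟩

lemma self_subset_cyl {s : ℝ} (hs : 0 ≤ s) : S ⊆ cyl S vec s := by
  intro a ha
  exact ⟨a, ha, 0, ⟨le_refl _, hs⟩, by simp⟩

lemma inner_of_mem_transl (hvec : ‖vec‖ = 1) (hA1 : ∀ a ∈ S, (inner ℝ a vec : ℝ) = B)
    {p : Pt d} {s : ℝ} (hp : p ∈ transl S vec s) : (inner ℝ p vec : ℝ) = B + s := by
  obtain ⟨a, ha, rfl⟩ := hp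
  rw [inner_add_smul_self hvec, hA1 a ha]

/-- Any vertex has a neighbour with strictly larger height. -/
lemma exists_adj_higher (hvec : ‖vec‖ = 1) (x : Vd d) :
    ∃ z : Vd d, Adj x z ∧ (inner ℝ (toPt x) vec : ℝ) < inner ℝ (toPt z) vec := by
  have hvne : vec ≠ 0 := by intro h; rw [h] at hvec; simp at hvec
  obtain ⟨j, hj⟩ : ∃ j, vec j ≠ 0 := by
    by_contra hcon; push_neg at hcon; exact hvne (PiLp.ext hcon)
  set σ : ℤ := if 0 < vec j then 1 else -1 with hσ
  have hσR : (σ : ℝ) * vec j > 0 := by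
    rcases lt_or_gt_of_ne hj with h | h
    · rw [hσ, if_neg (by linarith)]; push_cast; nlinarith
    · rw [hσ, if_pos h]; push_cast; nlinarith
  refine ⟨Function.update x j (x j + σ), ?_, ?_⟩
  · unfold Adj
    rw [Finset.sum_eq_single j]
    · rw [Function.update_self]
      have : σ ^ 2 = 1 := by
        rcases (by rcases lt_or_gt_of_ne hj with h | h
                   · exact Or.inr (by rw [hσ, if_neg (by linarith)])
                   · exact Or.inl (by rw [hσ, if_pos h]) : σ = 1 ∨ σ = -1) with h | h <;>
          rw [h] <;> ring
      rw [show x j - (x j + σ) = -σ by ring]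
      rw [neg_pow, this]; ring
    · intro i _ hij
      rw [Function.update_of_ne hij]; ring
    · intro habs; exact absurd (Finset.mem_univ j) habs
  · have htz : toPt (Function.update x j (x j + σ)) =
        toPt x + (σ : ℝ) • EuclideanSpace.single j (1 : ℝ) := by
      ext i
      by_cases hij : i = j
      · subst hij
        show ((Function.update x i (x i + σ) i : ℤ) : ℝ) = (x i : ℝ) + σ * (EuclideanSpace.single i (1 : ℝ) i)
        rw [Function.update_self, EuclideanSpace.single_apply, if_pos rfl]
        push_cast; ring
      · show ((Function.update x j (x j + σ) i : ℤ) : ℝ) = (x i : ℝ) + σ * (EuclideanSpace.single j (1 : ℝ) i)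
        rw [Function.update_of_ne hij, EuclideanSpace.single_apply, if_neg hij]
        ring
    rw [htz, inner_add_left, real_inner_smul_left, EuclideanSpace.inner_single_left]
    simp only [map_one, one_mul]
    linarith

/-- The discretized bottom of the cylinder is contained in the thickened base `cyl(S, d)`. -/
lemma bottom_subset_cylD (hvec : ‖vec‖ = 1) (hA1 : ∀ a ∈ S, (inner ℝ a vec : ℝ) = B)
    (hd1 : (1 : ℝ) ≤ (d : ℝ)) {s : ℝ} :
    ∀ x ∈ Bottom S vec s, toPt x ∈ cyl S vec (d : ℝ) := by
  rintro x ⟨hx, y, hadj, hy, p, hpseg, hpS⟩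
  obtain ⟨lam, mu, hlam, hmu, hsum, hcomb⟩ := hpseg
  have hip : (inner ℝ p vec : ℝ) = B := hA1 p hpS
  have hix := inner_mem_of_mem_cyl hvec hA1 hx
  have hcombi : (inner ℝ p vec : ℝ) =
      lam * inner ℝ (toPt x) vec + mu * inner ℝ (toPt y) vec := by
    rw [← hcomb, inner_add_left, real_inner_smul_left, real_inner_smul_left]
  have hdiff := inner_diff_le_of_adj hvec hadj
  rw [abs_le] at hdiff
  refine mem_cyl_of_le hvec hA1 hx ?_
  have hkey : (inner ℝ (toPt x) vec : ℝ) - B =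
      mu * ((inner ℝ (toPt x) vec : ℝ) - inner ℝ (toPt y) vec) := by
    linear_combination (-(inner ℝ (toPt x) vec : ℝ)) * hsum - hcombi + hip
  have h2 : mu * ((inner ℝ (toPt x) vec : ℝ) - inner ℝ (toPt y) vec) ≤ mu := by
    nlinarith [hdiff.2, hmu]
  have hmu1 : mu ≤ 1 := by linarith
  linarith

/-- The discretized top of the cylinder is contained in `W(S, s, vec)`. -/
lemma top_subset_W (hvec : ‖vec‖ = 1) (hA1 : ∀ a ∈ S, (inner ℝ a vec : ℝ) = B)
    (hA0 : S.Nonempty) {s : ℝ} (hs : 0 < s) :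
    TopV S vec s ⊆ Wset S vec s := by
  rintro x ⟨hx, y, hadj, hy, p, hpseg, hpT⟩
  have hxslab : toPt x ∈ slab S vec s := cyl_subset_slab hvec hA1 hA0 hx
  have hix := inner_mem_of_mem_cyl hvec hA1 hx
  have hip : (inner ℝ p vec : ℝ) = B + s := inner_of_mem_transl hvec hA1 hpT
  by_cases hyhigh : B + s < (inner ℝ (toPt y) vec : ℝ)
  · refine ⟨hxslab, y, hadj, ?_, ?_⟩
    · rw [slabInf_eq hvec hA1 hA0]
      show B ≤ _
      linarith
    · rw [slab_eq hvec hA1 hA0]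
      rintro ⟨-, h2⟩
      linarith
  · push_neg at hyhigh
    obtain ⟨lam, mu, hlam, hmu, hsum, hcomb⟩ := hpseg
    have hcombi : (inner ℝ p vec : ℝ) =
        lam * inner ℝ (toPt x) vec + mu * inner ℝ (toPt y) vec := by
      rw [← hcomb, inner_add_left, real_inner_smul_left, real_inner_smul_left]
    have hixtop : (inner ℝ (toPt x) vec : ℝ) = B + s := by
      by_cases hlam0 : lam = 0
      · exfalso
        apply hy
        have hmu1 : mu = 1 := by rw [hlam0] at hsum; linarith
        have hpy : p = toPt y := by rw [← hcomb, hlam0, hmu1]; simp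
        exact transl_subset_cyl (le_of_lt hs) (hpy ▸ hpT)
      · have hlampos : 0 < lam := lt_of_le_of_ne hlam (Ne.symm hlam0)
        have h1 : mu * (inner ℝ (toPt y) vec : ℝ) ≤ mu * (B + s) :=
          mul_le_mul_of_nonneg_left hyhigh hmu
        have e1 : lam * ((B + s) : ℝ) = (B + s) - mu * (B + s) := by
          linear_combination (B + s) * hsum
        have e2 : lam * (inner ℝ (toPt x) vec : ℝ) = (B + s) - mu * inner ℝ (toPt y) vec := by
          linear_combination hip - hcombi
        have h2 : B + s ≤ (inner ℝ (toPt x) vec : ℝ) :=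
          le_of_mul_le_mul_left (by linarith) hlampos
        have h3 : (inner ℝ (toPt x) vec : ℝ) ≤ B + s := by linarith [hix.2]
        linarith
    obtain ⟨z, hzadj, hzhigh⟩ := exists_adj_higher hvec x
    refine ⟨hxslab, z, hzadj, ?_, ?_⟩
    · rw [slabInf_eq hvec hA1 hA0]
      show B ≤ _
      rw [hixtop] at hzhigh
      linarith
    · rw [slab_eq hvec hA1 hA0]
      rintro ⟨-, h2⟩
      rw [hixtop] at hzhigh
      linarith

end Geometry

end Aux


end FPP
open FPP in
/-- On the event `E_n = ∩_{x ∈ cyl(nA, h(n)/2) ∩ ℤ^d} {card_v(C_{G,0}(x)) < h(n)/2}` one has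
`H_{G,h(n)}(nA) = h(n)`, every edge set achieving the infimum in `χ_G(nA, h(n), v)` is a cutset
of null (hence minimal) capacity between the top and the bottom of `cyl(nA, h(n))`, and
consequently `ψ_G(nA, h(n), v) ≤ χ_G(nA, h(n), v)`. -/
theorem psi_le_chi_on_good_event (d : ℕ)
    (Ω : Type) [MeasurableSpace Ω] (P : Measure Ω) [IsProbabilityMeasure P]
    (G : Measure ℝ≥0∞) [IsProbabilityMeasure G] (hG : 1 - pc d < G {0})
    (t : Sym2 (Vd d) → Ω → ℝ≥0∞) (ht : IIDField P G t)
    (vec : Pt d) (hvec : ‖vec‖ = 1)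
    (A : Set (Pt d)) (hA : IsHyperrect A vec)
    (h : ℕ → ℝ) (hh : StarCond h)
    (n : ℕ) (hn : 2 * d < h n) (ω : Ω)
    (hEn : ∀ x : Vd d, toPt x ∈ cyl (scale n A) vec (h n / 2) →
      ENat.toENNReal (cluster (fun e => t e ω) x).encard < ENNReal.ofReal (h n / 2)) :
    Hrand (fun e => t e ω) (scale n A) vec (h n) = h n ∧
      (∀ E : Set (Sym2 (Vd d)), (∀ e ∈ E, IsLatticeEdge e) →
        CutsSlab (scale n A) vec (Hrand (fun e => t e ω) (scale n A) vec (h n)) E →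
        capa (fun e => t e ω) E = 0 →
        E.encard = chi (fun e => t e ω) (scale n A) vec (h n) →
          CutsCyl (scale n A) vec (h n) E ∧
            capa (fun e => t e ω) E = Phi (fun e => t e ω) (scale n A) vec (h n) ∧
            Phi (fun e => t e ω) (scale n A) vec (h n) = 0) ∧
      psi (fun e => t e ω) (scale n A) vec (h n) ≤
        chi (fun e => t e ω) (scale n A) vec (h n) := by
  classical
  obtain ⟨R, rfl⟩ := hA
  set c : Cfg d := fun e => t e ω with hc
  set S : Set (Pt d) := scale n R.toSet with hS
  set B : ℝ := (n : ℝ) * inner ℝ R.base vec with hB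
  have hA1 : ∀ a ∈ S, (inner ℝ a vec : ℝ) = B := inner_scale_hyperrect R n
  have hA0 : S.Nonempty := scale_hyperrect_nonempty R n
  have hd1 : (1 : ℝ) ≤ (d : ℝ) := by
    rcases Nat.eq_zero_or_pos d with h0 | h0
    · exfalso
      subst h0
      have hv0 : vec = 0 := by ext i; exact i.elim0
      rw [hv0] at hvec; simp at hvec
    · exact_mod_cast h0
  have hpos : 0 < h n := hh.1 n
  -- Step 1 : the random height equals h n on the event E_n
  have hHset : (h n) ∈ {s : ℝ | h n ≤ s ∧
      (⋃ x ∈ {z : Vd d | toPt z ∈ cyl S vec (h n / 2)}, cluster c x) ∩ Wset S vec s = ∅} := by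
    refine ⟨le_refl _, ?_⟩
    rw [Set.eq_empty_iff_forall_notMem]
    rintro y ⟨hyU, hyW⟩
    rw [Set.mem_iUnion₂] at hyU
    obtain ⟨x, hxcyl, hyx⟩ := hyU
    have hxheight := inner_mem_of_mem_cyl hvec hA1 hxcyl
    obtain ⟨hyslab, z, hzadj, hzinf, hznot⟩ := hyW
    rw [slab_eq hvec hA1 hA0] at hznot
    rw [slabInf_eq hvec hA1 hA0] at hzinf
    have hz2 : h n < (inner ℝ (toPt z) vec : ℝ) - B := by
      by_contra hcon
      push_neg at hcon
      exact hznot ⟨by simpa using hzinf, hcon⟩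
    have hyz := inner_diff_le_of_adj hvec hzadj
    rw [abs_le] at hyz
    have hcl := hEn x hxcyl
    have hfin : (cluster c x).encard ≠ ⊤ := by
      intro hcon
      rw [hcon] at hcl
      simp at hcl
    lift (cluster c x).encard to ℕ using hfin with k hk
    have hkR : (k : ℝ) < h n / 2 := by
      rw [ENat.toENNReal_coe] at hcl
      rw [ENNReal.lt_ofReal_iff_toReal_lt (by simp)] at hcl
      simpa using hcl
    have hbound := reach_height_bound c (fun z => (inner ℝ (toPt z) vec : ℝ))
      (fun a b hab => by
        have := inner_diff_le_of_adj hvec hab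
        rw [abs_le] at this
        linarith [this.1]) hyx (le_of_eq hk.symm)
    linarith [hxheight.2, hyz.1]
  have hH : Hrand c S vec (h n) = h n := by
    unfold Hrand
    apply le_antisymm
    · exact csInf_le ⟨h n, fun s hs => hs.1⟩ hHset
    · exact le_csInf ⟨_, hHset⟩ fun s hs => hs.1
  -- Step 2 : any slab cutset restricted to the cylinder cuts the cylinder
  have hcut2 : ∀ E : Set (Sym2 (Vd d)), CutsSlab S vec (h n) E →
      CutsCyl S vec (h n) (E ∩ cylEdges S vec (h n)) := by
    intro E hE γ hγin hγ0 hγn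
    obtain ⟨i, hi, hmem⟩ := hE (LatPath.reverse γ)
      (fun i hi => cyl_subset_slab hvec hA1 hA0 (hγin (γ.n - i) (by omega)))
      (by
        show toPt (γ.v (γ.n - 0)) ∈ cyl S vec (d : ℝ)
        rw [Nat.sub_zero]
        exact bottom_subset_cylD hvec hA1 hd1 _ hγn)
      (by
        show γ.v (γ.n - γ.n) ∈ Wset S vec (h n)
        rw [Nat.sub_self]
        exact top_subset_W hvec hA1 hA0 hpos hγ0)
    have hi' : i < γ.n := hi
    refine ⟨γ.n - (i + 1), by omega, ?_, ?_⟩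
    · have e3 : γ.n - (i + 1) + 1 = γ.n - i := by omega
      have hedge : s(γ.v (γ.n - (i + 1)), γ.v (γ.n - (i + 1) + 1)) =
          s((LatPath.reverse γ).v i, (LatPath.reverse γ).v (i + 1)) := by
        rw [e3, Sym2.eq_swap]
        rfl
      rw [hedge]
      exact hmem
    · refine ⟨⟨γ.v (γ.n - (i + 1)), γ.v (γ.n - (i + 1) + 1), γ.adj _ (by omega), rfl⟩, ?_⟩
      intro w hw
      rw [Sym2.mem_iff] at hw
      rcases hw with hw | hw <;> subst hw
      · exact hγin _ (by omega)
      · exact hγin _ (by omega)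
  have hmono : ∀ E : Set (Sym2 (Vd d)), CutsSlab S vec (h n) E → CutsCyl S vec (h n) E := by
    intro E hE γ h1 h2 h3
    obtain ⟨i, hi, hm⟩ := hcut2 E hE γ h1 h2 h3
    exact ⟨i, hi, hm.1⟩
  have hsubcapa : ∀ E E' : Set (Sym2 (Vd d)), E' ⊆ E → capa c E = 0 → capa c E' = 0 := by
    intro E E' hsub h0
    rw [capa, ENNReal.tsum_eq_zero] at h0 ⊢
    exact fun e => h0 ⟨e.1, hsub e.2⟩
  have hPhi : ∀ E : Set (Sym2 (Vd d)), CutsSlab S vec (h n) E → capa c E = 0 →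
      Phi c S vec (h n) = 0 := by
    intro E hcs h0
    refine le_antisymm ?_ zero_le'
    refine sInf_le ⟨E ∩ cylEdges S vec (h n), Set.inter_subset_right, hcut2 E hcs, ?_⟩
    exact (hsubcapa E (E ∩ cylEdges S vec (h n)) Set.inter_subset_left h0).symm
  have hpsichi : psi c S vec (h n) ≤ chi c S vec (h n) := by
    apply le_sInf
    rintro r ⟨E, hlat, hcs, h0, rfl⟩
    rw [hH] at hcs
    have hmem : (E ∩ cylEdges S vec (h n)).encard ∈ {r | ∃ E' : Set (Sym2 (Vd d)),
        E' ⊆ cylEdges S vec (h n) ∧ CutsCyl S vec (h n) E' ∧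
        capa c E' = Phi c S vec (h n) ∧ r = E'.encard} :=
      ⟨E ∩ cylEdges S vec (h n), Set.inter_subset_right, hcut2 E hcs,
        by rw [hsubcapa E (E ∩ cylEdges S vec (h n)) Set.inter_subset_left h0, hPhi E hcs h0], rfl⟩
    calc psi c S vec (h n) ≤ (E ∩ cylEdges S vec (h n)).encard := sInf_le hmem
      _ ≤ E.encard := Set.encard_mono Set.inter_subset_left
  refine ⟨hH, ?_, hpsichi⟩
  intro E hlat hcs h0 hcard
  rw [hH] at hcs
  have hphi0 := hPhi E hcs h0
  exact ⟨hmono E hcs, by rw [h0, hphi0], hphi0⟩
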